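/- Let H be the digraph with vertex set {1,2,3,4,5,6} and arc set {12, 21, 34, 43, 56, 65, 23, 25, 14, 16, 54, 36} (a copy of N1). Given a digraph D with M = |V(D)|, let D' be the digraph obtained from D by replacing every arc uv of D with the gadget consisting of three new vertices x_{uv}, y_{uv}, z_{uv} (distinct for different arcs) and the four arcs u→x_{uv}, x_{uv}→y_{uv}, y_{uv}→z_{uv}, v→z_{uv} (so D' has no arcs between vertices of D). Define costs on D': for every t ∈ V(D), c_2(t) = 1, c_6(t) = 0, and c_i(t) = 2M+1 for i ∉ {2,6}; c_6(y_{uv}) = 2M+1 for every arc uv of D; all remaining costs are 0. Then a homomorphism of D' to H exists, and the minimum cost of a homomorphism of D' to H equals |V(D)| − α(D). -/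

import Mathlib

namespace MinHomN1

/-- the target digraph: vertices 1,…,6 (as 0,…,5 : Fin 6) and arcs
{12, 21, 34, 43, 56, 65, 23, 25, 14, 16, 54, 36}; a copy of N1. -/
def HArc : Fin 6 → Fin 6 → Prop := fun a b =>
  (a, b) ∈ ([(0,1),(1,0),(2,3),(3,2),(4,5),(5,4),(1,2),(1,4),(0,3),(0,5),(4,3),(2,5)] :
    List (Fin 6 × Fin 6))

/-- vertex set of D': the vertices of D together with three gadget vertices
x_{uv} = (e,0), y_{uv} = (e,1), z_{uv} = (e,2) for every arc e = uv of D. -/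
abbrev GV (α : Type*) (Ad : α → α → Prop) : Type _ :=
  α ⊕ ({p : α × α // Ad p.1 p.2} × Fin 3)

/-- arcs of D': for each arc e = uv of D the gadget arcs
u→x_e, x_e→y_e, y_e→z_e, v→z_e. -/
def GArc {α : Type*} (Ad : α → α → Prop) : GV α Ad → GV α Ad → Prop
  | Sum.inl u, Sum.inr (e, i) => (u = e.1.1 ∧ i = 0) ∨ (u = e.1.2 ∧ i = 2)
  | Sum.inr (e, i), Sum.inr (e', i') => e = e' ∧ ((i = 0 ∧ i' = 1) ∨ (i = 1 ∧ i' = 2))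
  | _, _ => False

/-- costs (with M = |V(D)|): for t ∈ V(D), c_2(t) = 1, c_6(t) = 0, c_i(t) = 2M+1 for
i ∉ {2,6}; c_6(y_e) = 2M+1 for every arc e; all remaining costs are 0.
(Vertices 2 and 6 are indices 1 and 5 : Fin 6.) -/
def cost {α : Type*} (Ad : α → α → Prop) (M : ℕ) : Fin 6 → GV α Ad → ℕ
  | h, Sum.inl _ => if h = 1 then 1 else if h = 5 then 0 else 2 * M + 1
  | h, Sum.inr (_, i) => if i = 1 ∧ h = 5 then 2 * M + 1 else 0

instance (a b : Fin 6) : Decidable (HArc a b) := by unfold HArc; infer_instance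


section Aux
variable {α : Type*} [Fintype α] [DecidableEq α] (Ad : α → α → Prop) [DecidableRel Ad]

def hmap (S : Finset α) : GV α Ad → Fin 6
  | Sum.inl v => if v ∈ S then 5 else 1
  | Sum.inr (e, i) =>
      if e.1.1 ∈ S then
        (if e.1.2 ∈ S then ![4,5,4] else ![4,3,2]) i
      else
        (if e.1.2 ∈ S then ![0,1,4] else ![0,1,0]) i

lemma hmap_hom (S : Finset α) :
    ∀ x y, GArc Ad x y → HArc (hmap Ad S x) (hmap Ad S y) := by
  rintro (u | ⟨e, i⟩) (v | ⟨e', i'⟩) h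
  · exact h.elim
  · rcases h with ⟨rfl, rfl⟩ | ⟨rfl, rfl⟩ <;>
    · simp only [hmap]
      by_cases h1 : e'.1.1 ∈ S <;> by_cases h2 : e'.1.2 ∈ S <;> simp [h1, h2] <;> decide
  · exact h.elim
  · obtain ⟨rfl, h⟩ := h
    rcases h with ⟨rfl, rfl⟩ | ⟨rfl, rfl⟩ <;>
    · simp only [hmap]
      by_cases h1 : e.1.1 ∈ S <;> by_cases h2 : e.1.2 ∈ S <;> simp [h1, h2] <;> decide

lemma sum_indicator (S : Finset α) :
    ∑ a : α, (if a ∈ S then 0 else 1) = Fintype.card α - S.card := by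
  classical
  rw [← Finset.sum_filter_add_sum_filter_not Finset.univ (· ∈ S)]
  have h1 : ∑ a ∈ Finset.univ.filter (· ∈ S), (if a ∈ S then 0 else 1) = 0 := by
    apply Finset.sum_eq_zero; intro a ha
    simp [Finset.mem_filter.mp ha |>.2]
  have h2 : ∑ a ∈ Finset.univ.filter (fun a => ¬ a ∈ S), (if a ∈ S then 0 else 1)
      = (Finset.univ.filter (fun a => ¬ a ∈ S)).card := by
    rw [Finset.card_eq_sum_ones]
    apply Finset.sum_congr rfl; intro a ha
    simp [Finset.mem_filter.mp ha |>.2]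
  rw [h1, h2, Finset.filter_not, Finset.card_sdiff_of_subset (Finset.filter_subset _ _)]
  simp [Finset.filter_mem_eq_inter]

lemma hmap_cost (hirr : Irreflexive Ad) (S : Finset α)
    (hS : ∀ a ∈ S, ∀ b ∈ S, a ≠ b → ¬ Ad a b) :
    ∑ w, cost Ad (Fintype.card α) (hmap Ad S w) w = Fintype.card α - S.card := by
  classical
  rw [Fintype.sum_sum_type]
  have h2 : ∑ p : {p : α × α // Ad p.1 p.2} × Fin 3,
      cost Ad (Fintype.card α) (hmap Ad S (Sum.inr p)) (Sum.inr p) = 0 := by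
    apply Finset.sum_eq_zero
    rintro ⟨e, i⟩ -
    simp only [cost, hmap]
    refine if_neg ?_
    rintro ⟨rfl, h5⟩
    by_cases h1 : e.1.1 ∈ S <;> by_cases hb : e.1.2 ∈ S <;> simp [h1, hb] at h5
    rcases eq_or_ne e.1.1 e.1.2 with h | h
    · have he := e.2; rw [h] at he; exact hirr _ he
    · exact hS _ h1 _ hb h e.2
  rw [h2, add_zero]
  have h1 : ∀ a : α, cost Ad (Fintype.card α) (hmap Ad S (Sum.inl a)) (Sum.inl a)
      = if a ∈ S then 0 else 1 := by
    intro a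
    simp only [cost, hmap]
    by_cases h : a ∈ S <;> simp [h]
  simp only [h1]
  exact sum_indicator S

end Aux

/-- Lemma 4.4: a homomorphism of D' to H exists, and the minimum cost of a homomorphism
of D' to H equals |V(D)| − α(D). -/
theorem stmt16 {α : Type*} [Fintype α] [DecidableEq α]
    (Ad : α → α → Prop) [DecidableRel Ad] (hirr : Irreflexive Ad) :
    ∃ m : ℕ,
      IsGreatest {n : ℕ | ∃ S : Finset α,
        (∀ a ∈ S, ∀ b ∈ S, a ≠ b → ¬ Ad a b) ∧ S.card = n} m ∧
      (∃ f : GV α Ad → Fin 6, ∀ x y, GArc Ad x y → HArc (f x) (f y)) ∧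
      IsLeast {n : ℕ | ∃ f : GV α Ad → Fin 6,
          (∀ x y, GArc Ad x y → HArc (f x) (f y)) ∧
          (∑ w, cost Ad (Fintype.card α) (f w) w) = n}
        (Fintype.card α - m) := by
  classical
  set T : Finset ℕ := (Finset.univ.powerset.filter
      (fun S : Finset α => ∀ a ∈ S, ∀ b ∈ S, a ≠ b → ¬ Ad a b)).image Finset.card with hT
  have hne : T.Nonempty := by
    refine ⟨0, ?_⟩
    simp only [hT, Finset.mem_image, Finset.mem_filter, Finset.mem_powerset]
    exact ⟨∅, ⟨Finset.empty_subset _, by simp⟩, rfl⟩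
  set m := T.max' hne with hm
  have hmT : m ∈ T := T.max'_mem hne
  obtain ⟨S0, hS0, hS0card⟩ := Finset.mem_image.mp hmT
  obtain ⟨-, hS0ind⟩ := Finset.mem_filter.mp hS0
  have hGreat : IsGreatest {n : ℕ | ∃ S : Finset α,
      (∀ a ∈ S, ∀ b ∈ S, a ≠ b → ¬ Ad a b) ∧ S.card = n} m := by
    constructor
    · exact ⟨S0, hS0ind, hS0card⟩
    · rintro n ⟨S, hSind, rfl⟩
      apply T.le_max'
      exact Finset.mem_image.mpr ⟨S, Finset.mem_filter.mpr
        ⟨Finset.mem_powerset.mpr (Finset.subset_univ S), hSind⟩, rfl⟩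
  have hmle : m ≤ Fintype.card α := by
    rw [← hS0card]
    exact Finset.card_le_card (Finset.subset_univ S0)
  refine ⟨m, hGreat, ⟨hmap Ad S0, hmap_hom Ad S0⟩, ?_, ?_⟩
  · exact ⟨hmap Ad S0, hmap_hom Ad S0, by rw [hmap_cost Ad hirr S0 hS0ind, hS0card]⟩
  · rintro n ⟨f, hf, rfl⟩
    set S := Finset.univ.filter (fun a => f (Sum.inl a) = 5) with hSdef
    have hsplit : ∑ w, cost Ad (Fintype.card α) (f w) w
        = (∑ a : α, cost Ad (Fintype.card α) (f (Sum.inl a)) (Sum.inl a))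
        + ∑ p : {p : α × α // Ad p.1 p.2} × Fin 3,
            cost Ad (Fintype.card α) (f (Sum.inr p)) (Sum.inr p) :=
      Fintype.sum_sum_type _
    by_cases hind : ∀ a ∈ S, ∀ b ∈ S, a ≠ b → ¬ Ad a b
    · have hcard : S.card ≤ m := hGreat.2 ⟨S, hind, rfl⟩
      have hterm : ∀ a : α, (if a ∈ S then 0 else 1)
          ≤ cost Ad (Fintype.card α) (f (Sum.inl a)) (Sum.inl a) := by
        intro a
        have hmem : a ∈ S ↔ f (Sum.inl a) = 5 := by simp [hSdef]
        by_cases h : f (Sum.inl a) = 5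
        · simp [hmem.mpr h]
        · rw [if_neg (fun hc => h (hmem.mp hc))]
          by_cases h1 : f (Sum.inl a) = 1
          · simp [cost, h1]
          · simp only [cost, if_neg h1, if_neg h]
            omega
      have hlow : Fintype.card α - S.card ≤ ∑ a : α,
          cost Ad (Fintype.card α) (f (Sum.inl a)) (Sum.inl a) := by
        rw [← sum_indicator S]
        exact Finset.sum_le_sum (fun a _ => hterm a)
      rw [hsplit]
      omega
    · push_neg at hind
      obtain ⟨a, ha, b, hb, hab, hAd⟩ := hind
      have hfa : f (Sum.inl a) = 5 := (Finset.mem_filter.mp ha).2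
      have hfb : f (Sum.inl b) = 5 := (Finset.mem_filter.mp hb).2
      set e : {p : α × α // Ad p.1 p.2} := ⟨(a, b), hAd⟩ with he
      have hx := hf (Sum.inl a) (Sum.inr (e, 0)) (Or.inl ⟨rfl, rfl⟩)
      have hxy := hf (Sum.inr (e, 0)) (Sum.inr (e, 1)) ⟨rfl, Or.inl ⟨rfl, rfl⟩⟩
      have hyz := hf (Sum.inr (e, 1)) (Sum.inr (e, 2)) ⟨rfl, Or.inr ⟨rfl, rfl⟩⟩
      have hz := hf (Sum.inl b) (Sum.inr (e, 2)) (Or.inr ⟨rfl, rfl⟩)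
      rw [hfa] at hx
      rw [hfb] at hz
      have key : ∀ x y z : Fin 6, HArc 5 x → HArc x y → HArc y z → HArc 5 z → y = 5 := by
        decide
      have hy5 : f (Sum.inr (e, 1)) = 5 := key _ _ _ hx hxy hyz hz
      have hbig : cost Ad (Fintype.card α) (f (Sum.inr (e, 1))) (Sum.inr (e, 1))
          = 2 * Fintype.card α + 1 := by
        simp [cost, hy5]
      have hle : 2 * Fintype.card α + 1 ≤ ∑ w, cost Ad (Fintype.card α) (f w) w := by
        rw [← hbig]
        exact Finset.single_le_sum (f := fun w => cost Ad (Fintype.card α) (f w) w)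
          (fun w _ => Nat.zero_le _) (Finset.mem_univ _)
      omega


end MinHomN1
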